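/- arXiv:1212.1519 — 2 statements merged into one kernel-verified Lean document; each statement's English description precedes it below -/
import Mathlib

section
/- Let n ≥ 1 and 0 ≤ k ≤ n−1. Let λ₁, λ₁' be duplicate-free lists whose set of entries is exactly {1, …, k}, and let λ₂, λ₂' be duplicate-free lists whose set of entries is exactly {k+2, …, n}. Then λ₁ ++ λ₂ ++ [k+1] is isotopy equivalent to λ₁' ++ λ₂' ++ [k+1] if and only if λ₁ is isotopy equivalent to λ₁' and λ₂ is isotopy equivalent to λ₂'. -/
/-- An elementary move on a duplicate-free list of natural numbers: transpose two
adjacent entries `x = i_j` and `y = i_{j+1}` for which there exists a later entry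
`p = i_q` (with `q > j+1`) such that `x < p < y` or `x > p > y`. -/
def ElemMove (l l' : List ℕ) : Prop :=
  l.Nodup ∧ ∃ (a b : List ℕ) (x y : ℕ),
    l = a ++ x :: y :: b ∧ l' = a ++ y :: x :: b ∧
    ∃ p ∈ b, (x < p ∧ p < y) ∨ (y < p ∧ p < x)

/-- Isotopy equivalence: the smallest equivalence relation generated by elementary moves. -/
def IsoEquiv : List ℕ → List ℕ → Prop := Relation.EqvGen ElemMove

/-!
Every isotopy move permutes entries, so duplicate-freeness is preserved, and a move inside a block
of a duplicate-free list is still a move of the whole list; hence equivalent blocks give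
equivalent normal forms. Conversely, filtering a list by an order-convex set of values maps each
move either to a move (when both transposed entries survive, and then so does the witness lying
between them) or to the identity. The entries `≤ k` and `≥ k + 2` form such sets, and they cut
the normal form `λ₁ ++ λ₂ ++ [k + 1]` back into `λ₁` and `λ₂`.
-/

open Relation

theorem Relation.EqvGen.map {α β : Type*} {r : α → α → Prop} {s : β → β → Prop} (f : α → β)
    (hf : ∀ a b, r a b → EqvGen s (f a) (f b)) {a b : α} (hab : EqvGen r a b) :
    EqvGen s (f a) (f b) :=
  (InvImage.equivalence _ f (EqvGen.is_equivalence s)).eqvGen_iff.1 (hab.mono hf)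

theorem ElemMove.perm {l l' : List ℕ} (h : ElemMove l l') : l.Perm l' := by
  obtain ⟨-, a, b, x, y, rfl, rfl, -⟩ := h
  exact (List.Perm.swap y x b).append_left a

theorem IsoEquiv.perm {l l' : List ℕ} (h : IsoEquiv l l') : l.Perm l' :=
  (List.Perm.eqv ℕ).eqvGen_iff.1 (h.mono fun _ _ => ElemMove.perm)

theorem ElemMove.append_append {l l' : List ℕ} (a s : List ℕ) (h : ElemMove l l')
    (hnd : (a ++ l ++ s).Nodup) : ElemMove (a ++ l ++ s) (a ++ l' ++ s) := by
  obtain ⟨-, c, b, x, y, rfl, rfl, p, hp, hxpy⟩ := h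
  exact ⟨hnd, a ++ c, b ++ s, x, y, by simp, by simp, p, List.mem_append_left s hp, hxpy⟩

theorem IsoEquiv.append_append {l l' : List ℕ} (a s : List ℕ) (h : IsoEquiv l l')
    (hnd : (a ++ l ++ s).Nodup) : IsoEquiv (a ++ l ++ s) (a ++ l' ++ s) := by
  have nodup_iff {u v : List ℕ} (huv : EqvGen ElemMove u v) :
      (a ++ u ++ s).Nodup ↔ (a ++ v ++ s).Nodup :=
    (((IsoEquiv.perm huv).append_left a).append_right s).nodup_iff
  induction h with
  | rel _ _ h => exact .rel _ _ (h.append_append a s hnd)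
  | refl => exact .refl _
  | symm _ _ huv ih => exact .symm _ _ (ih ((nodup_iff huv).2 hnd))
  | trans _ _ _ huv _ ih₁ ih₂ => exact .trans _ _ _ (ih₁ hnd) (ih₂ ((nodup_iff huv).1 hnd))

section Filter

variable {s : Set ℕ} [DecidablePred (· ∈ s)]

theorem ElemMove.filter_of_ordConnected (hs : s.OrdConnected) {l l' : List ℕ}
    (h : ElemMove l l') : IsoEquiv (l.filter (· ∈ s)) (l'.filter (· ∈ s)) := by
  obtain ⟨hnd, a, b, x, y, rfl, rfl, p, hp, hxpy⟩ := h
  by_cases hx : x ∈ s <;> by_cases hy : y ∈ s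
  · have hps : p ∈ s := by
      rcases hxpy with ⟨hxp, hpy⟩ | ⟨hyp, hpx⟩
      · exact hs.out hx hy ⟨hxp.le, hpy.le⟩
      · exact hs.out hy hx ⟨hyp.le, hpx.le⟩
    refine .rel _ _ ⟨hnd.filter _, a.filter (· ∈ s), b.filter (· ∈ s), x, y, ?_, ?_, p, ?_, hxpy⟩
    · simp [List.filter_append, hx, hy]
    · simp [List.filter_append, hx, hy]
    · simpa using ⟨hp, hps⟩
  all_goals
    have hswap : (x :: y :: b).filter (· ∈ s) = (y :: x :: b).filter (· ∈ s) := by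
      simp [hx, hy]
    rw [List.filter_append, List.filter_append, hswap]
    exact .refl _

theorem IsoEquiv.filter_of_ordConnected (hs : s.OrdConnected) {l l' : List ℕ}
    (h : IsoEquiv l l') : IsoEquiv (l.filter (· ∈ s)) (l'.filter (· ∈ s)) :=
  EqvGen.map (r := ElemMove) _ (fun _ _ => ElemMove.filter_of_ordConnected hs) h

end Filter

section NormalForm

variable {k : ℕ} {l₁ l₂ : List ℕ} (h₁ : ∀ x ∈ l₁, x ≤ k) (h₂ : ∀ x ∈ l₂, k + 2 ≤ x)
include h₁ h₂

theorem filter_Iic_normalForm : (l₁ ++ l₂ ++ [k + 1]).filter (· ∈ Set.Iic k) = l₁ := by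
  rw [List.filter_append, List.filter_append,
    (List.filter_eq_self (l := l₁)).2 fun x hx => by simpa using h₁ x hx,
    (List.filter_eq_nil_iff (l := l₂)).2 fun x hx => by simpa using (h₂ x hx).trans_lt' (by omega)]
  simp

theorem filter_Ici_normalForm : (l₁ ++ l₂ ++ [k + 1]).filter (· ∈ Set.Ici (k + 2)) = l₂ := by
  rw [List.filter_append, List.filter_append,
    (List.filter_eq_nil_iff (l := l₁)).2 fun x hx => by simpa using (h₁ x hx).trans_lt (by omega),
    (List.filter_eq_self (l := l₂)).2 fun x hx => by simpa using h₂ x hx]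
  simp

theorem nodup_normalForm (hl₁ : l₁.Nodup) (hl₂ : l₂.Nodup) : (l₁ ++ l₂ ++ [k + 1]).Nodup := by
  refine List.nodup_append.2 ⟨List.nodup_append.2 ⟨hl₁, hl₂, ?_⟩, List.nodup_singleton _, ?_⟩
  · intro x hx y hy
    have := h₁ x hx; have := h₂ y hy; omega
  · intro x hx y hy
    rcases List.mem_append.1 hx with hx | hx
    · have := h₁ x hx; have := List.mem_singleton.1 hy; omega
    · have := h₂ x hx; have := List.mem_singleton.1 hy; omega

end NormalForm

theorem isoEquiv_normal_form_iff_general (n k : ℕ)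
    (lam₁ lam₁' lam₂ lam₂' : List ℕ)
    (h₁ : lam₁.Nodup) (h₁m : ∀ x, x ∈ lam₁ ↔ x ∈ Finset.Icc 1 k)
    (h₁' : lam₁'.Nodup) (h₁'m : ∀ x, x ∈ lam₁' ↔ x ∈ Finset.Icc 1 k)
    (h₂ : lam₂.Nodup) (h₂m : ∀ x, x ∈ lam₂ ↔ x ∈ Finset.Icc (k + 2) n)
    (h₂'m : ∀ x, x ∈ lam₂' ↔ x ∈ Finset.Icc (k + 2) n) :
    IsoEquiv (lam₁ ++ lam₂ ++ [k + 1]) (lam₁' ++ lam₂' ++ [k + 1]) ↔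
      IsoEquiv lam₁ lam₁' ∧ IsoEquiv lam₂ lam₂' := by
  have low {l : List ℕ} (hl : ∀ x, x ∈ l ↔ x ∈ Finset.Icc 1 k) : ∀ x ∈ l, x ≤ k :=
    fun x hx => (Finset.mem_Icc.1 ((hl x).1 hx)).2
  have high {l : List ℕ} (hl : ∀ x, x ∈ l ↔ x ∈ Finset.Icc (k + 2) n) : ∀ x ∈ l, k + 2 ≤ x :=
    fun x hx => (Finset.mem_Icc.1 ((hl x).1 hx)).1
  constructor
  · intro h
    have e₁ := h.filter_of_ordConnected (s := Set.Iic k) Set.ordConnected_Iic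
    have e₂ := h.filter_of_ordConnected (s := Set.Ici (k + 2)) Set.ordConnected_Ici
    rw [filter_Iic_normalForm (low h₁m) (high h₂m), filter_Iic_normalForm (low h₁'m) (high h₂'m)]
      at e₁
    rw [filter_Ici_normalForm (low h₁m) (high h₂m), filter_Ici_normalForm (low h₁'m) (high h₂'m)]
      at e₂
    exact ⟨e₁, e₂⟩
  · rintro ⟨e₁, e₂⟩
    have step₁ := e₁.append_append [] (lam₂ ++ [k + 1])
      (by simpa using nodup_normalForm (low h₁m) (high h₂m) h₁ h₂)
    have step₂ := e₂.append_append lam₁' [k + 1] (nodup_normalForm (low h₁'m) (high h₂m) h₁' h₂)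
    simp only [List.nil_append, ← List.append_assoc] at step₁
    exact step₁.trans _ _ _ step₂

/-- Two normal forms `λ₁ ++ λ₂ ++ [k+1]` and `λ₁' ++ λ₂' ++ [k+1]` (with `λ₁, λ₁'`
permutations of `{1, …, k}` and `λ₂, λ₂'` permutations of `{k+2, …, n}`) are isotopy
equivalent if and only if `λ₁` is isotopy equivalent to `λ₁'` and `λ₂` is isotopy
equivalent to `λ₂'`. -/
theorem isoEquiv_normal_form_iff (n k : ℕ) (hn : 1 ≤ n) (hk : k ≤ n - 1)
    (lam₁ lam₁' lam₂ lam₂' : List ℕ)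
    (h₁ : lam₁.Nodup) (h₁m : ∀ x, x ∈ lam₁ ↔ x ∈ Finset.Icc 1 k)
    (h₁' : lam₁'.Nodup) (h₁'m : ∀ x, x ∈ lam₁' ↔ x ∈ Finset.Icc 1 k)
    (h₂ : lam₂.Nodup) (h₂m : ∀ x, x ∈ lam₂ ↔ x ∈ Finset.Icc (k + 2) n)
    (h₂' : lam₂'.Nodup) (h₂'m : ∀ x, x ∈ lam₂' ↔ x ∈ Finset.Icc (k + 2) n) :
    IsoEquiv (lam₁ ++ lam₂ ++ [k + 1]) (lam₁' ++ lam₂' ++ [k + 1]) ↔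
      IsoEquiv lam₁ lam₁' ∧ IsoEquiv lam₂ lam₂' :=
  isoEquiv_normal_form_iff_general n k lam₁ lam₁' lam₂ lam₂' h₁ h₁m h₁' h₁'m h₂ h₂m h₂'m
end

section
/- Let l be an augmentation vector over F₂ = ZMod 2 containing at least one entry equal to 1. Then there is a finite sequence of lists l = l₀, l₁, …, l_N = [] (the empty list) such that, for each m < N, l_{m+1} is a resolution of l_m at an entry equal to 1, and every l_m is an augmentation vector. -/
/-- The matrix `M(a) = [[a,1],[1,0]]` over `F₂ = ZMod 2`. -/
def M (a : ZMod 2) : Matrix (Fin 2) (Fin 2) (ZMod 2) := !![a, 1; 1, 0]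

/-- The ordered product `B(ε_1, …, ε_n) = M(ε_1)·M(ε_2)⋯M(ε_n)`. -/
def B (l : List (ZMod 2)) : Matrix (Fin 2) (Fin 2) (ZMod 2) := (l.map M).prod

/-- A list is an augmentation vector if the `(0,0)` entry of `B(l)` equals `1`. -/
def IsAug (l : List (ZMod 2)) : Prop := B l 0 0 = 1

/-- Add `1` to the first entry of a list (identity on the empty list). -/
def bumpHead : List (ZMod 2) → List (ZMod 2)
  | [] => []
  | x :: xs => (x + 1) :: xs

/-- Add `1` to the last entry of a list (identity on the empty list). -/
def bumpLast (l : List (ZMod 2)) : List (ZMod 2) := (bumpHead l.reverse).reverse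

lemma B_nil : B [] = 1 := rfl
lemma B_cons (x : ZMod 2) (l : List (ZMod 2)) : B (x :: l) = M x * B l := by simp [B]
lemma B_append (a b : List (ZMod 2)) : B (a ++ b) = B a * B b := by simp [B]
lemma entry00 (A C : Matrix (Fin 2) (Fin 2) (ZMod 2)) :
    (A * C) 0 0 = A 0 0 * C 0 0 + A 0 1 * C 1 0 := by
  simp [Matrix.mul_apply, Fin.sum_univ_two]
lemma Mkey : ∀ x y : ZMod 2, M x * M 1 * M y = M (x+1) * M (y+1) := by decide
lemma MrowKey0 : ∀ y : ZMod 2, (M 1 * M y) 0 0 = M (y+1) 0 0 := by decide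
lemma MrowKey1 : ∀ y : ZMod 2, (M 1 * M y) 0 1 = M (y+1) 0 1 := by decide
lemma McolKey0 : ∀ x : ZMod 2, (M x * M 1) 0 0 = M (x+1) 0 0 := by decide
lemma McolKey1 : ∀ x : ZMod 2, (M x * M 1) 1 0 = M (x+1) 1 0 := by decide
lemma isAug_nil : IsAug [] := by simp [IsAug, B_nil, Matrix.one_apply]
lemma bumpLast_concat (a : List (ZMod 2)) (x : ZMod 2) :
    bumpLast (a ++ [x]) = a ++ [x+1] := by simp [bumpLast, bumpHead]

lemma isAug_resolve (a b : List (ZMod 2)) (h : IsAug (a ++ [1] ++ b)) :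
    IsAug (bumpLast a ++ bumpHead b) := by
  rcases List.eq_nil_or_concat a with rfl | ⟨a', x, rfl⟩
  · cases b with
    | nil => exact isAug_nil
    | cons y b' =>
      have h' : ((M 1 * M y) * B b') 0 0 = 1 := by
        simpa [IsAug, B_cons, mul_assoc] using h
      rw [entry00, MrowKey0, MrowKey1] at h'
      show IsAug ((y+1) :: b')
      rw [IsAug, B_cons, entry00]
      exact h'
  · rw [List.concat_eq_append] at h ⊢
    cases b with
    | nil =>
      have h' : (B a' * (M x * M 1)) 0 0 = 1 := by
        simpa [IsAug, B_append, B_cons, B_nil, mul_assoc] using h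
      rw [entry00, McolKey0, McolKey1] at h'
      rw [bumpLast_concat]
      show IsAug (a' ++ [x+1] ++ [])
      rw [IsAug, B_append, B_append, B_cons, B_nil]
      simpa [entry00] using h'
    | cons y b' =>
      have hB : B (a' ++ [x] ++ [1] ++ (y :: b')) = B (bumpLast (a' ++ [x]) ++ bumpHead (y :: b')) := by
        rw [bumpLast_concat]
        show _ = B ((a' ++ [x+1]) ++ ((y+1) :: b'))
        have key : M x * (M 1 * (M y * B b')) = M (x+1) * (M (y+1) * B b') := by
          rw [← mul_assoc, ← mul_assoc, Mkey, mul_assoc]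
        simp [B_append, B_cons, B_nil, mul_assoc, key]
      rw [IsAug, ← hB]
      exact h

lemma z01 : ∀ z : ZMod 2, z ≠ 1 → z = 0 := by decide

lemma first_one {l : List (ZMod 2)} (h : (1:ZMod 2) ∈ l) :
    ∃ a b, l = a ++ [1] ++ b ∧ (1:ZMod 2) ∉ a := by
  induction l with
  | nil => simp at h
  | cons x t ih =>
    by_cases hx : x = 1
    · exact ⟨[], t, by simp [hx], by simp⟩
    · have ht : (1:ZMod 2) ∈ t := by
        rcases List.mem_cons.mp h with h | h
        · exact absurd h.symm hx
        · exact h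
      obtain ⟨a, b, rfl, ha⟩ := ih ht
      exact ⟨x::a, b, by simp, by
        simp only [List.mem_cons, not_or]
        exact ⟨fun e => hx e.symm, ha⟩⟩

lemma not_aug_11 : ¬ IsAug [1, 1] := by unfold IsAug; decide

lemma exists_good (l : List (ZMod 2)) (haug : IsAug l) (h1 : (1:ZMod 2) ∈ l) :
    ∃ a b, l = a ++ [1] ++ b ∧
      (bumpLast a ++ bumpHead b = [] ∨ (1:ZMod 2) ∈ bumpLast a ++ bumpHead b) := by
  obtain ⟨a, b, rfl, ha⟩ := first_one h1
  rcases List.eq_nil_or_concat a with rfl | ⟨a', x, rfl⟩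
  · cases b with
    | nil => exact ⟨[], [], rfl, Or.inl rfl⟩
    | cons y b' =>
      by_cases hy : y = 1
      · subst hy
        by_cases hb' : (1:ZMod 2) ∈ b'
        · exact ⟨[], 1::b', rfl, Or.inr (by simp [bumpLast, bumpHead, hb'])⟩
        · cases b' with
          | nil => exact absurd haug not_aug_11
          | cons z b'' =>
            have hz : z = 0 := z01 z (fun e => hb' (by simp [e]))
            exact ⟨[1], z::b'', by simp, Or.inr (by simp [bumpLast, bumpHead, hz])⟩
      · have hy0 : y = 0 := z01 y hy
        exact ⟨[], y::b', rfl, Or.inr (by simp [bumpLast, bumpHead, hy0])⟩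
  · have hx : x = 0 := z01 x (by
      intro e
      exact ha (by rw [List.concat_eq_append, e]; simp))
    refine ⟨a'.concat x, b, rfl, Or.inr ?_⟩
    rw [List.concat_eq_append, bumpLast_concat, hx]
    simp

lemma bumpHead_length (l : List (ZMod 2)) : (bumpHead l).length = l.length := by
  cases l <;> simp [bumpHead]

lemma bumpLast_length (l : List (ZMod 2)) : (bumpLast l).length = l.length := by
  simp [bumpLast, bumpHead_length]

lemma reduce : ∀ (n : ℕ) (l : List (ZMod 2)), l.length ≤ n → IsAug l →
    ((1:ZMod 2) ∈ l ∨ l = []) →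
    ∃ (N : ℕ) (f : ℕ → List (ZMod 2)), f 0 = l ∧ f N = [] ∧
      (∀ m < N, ∃ a b : List (ZMod 2),
        f m = a ++ [1] ++ b ∧ f (m + 1) = bumpLast a ++ bumpHead b) ∧
      (∀ m ≤ N, IsAug (f m)) := by
  intro n
  induction n with
  | zero =>
    intro l hl _ _
    have : l = [] := List.length_eq_zero_iff.mp (Nat.le_zero.mp hl)
    subst this
    exact ⟨0, fun _ => [], rfl, rfl, by simp, fun m _ => isAug_nil⟩
  | succ n ih =>
    intro l hl haug hmem
    rcases hmem with h1 | rfl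
    · obtain ⟨a, b, rfl, hgood⟩ := exists_good _ haug h1
      have haug' : IsAug (bumpLast a ++ bumpHead b) := isAug_resolve a b haug
      have hlen : (bumpLast a ++ bumpHead b).length ≤ n := by
        simp only [List.length_append, bumpLast_length, bumpHead_length,
          List.length_cons, List.length_nil] at hl ⊢
        omega
      obtain ⟨N, f, hf0, hfN, hstep, hIs⟩ := ih _ hlen haug' hgood.symm
      refine ⟨N+1, fun m => Nat.casesOn m (a ++ [1] ++ b) f, rfl, hfN, ?_, ?_⟩
      · intro m hm
        cases m with
        | zero => exact ⟨a, b, rfl, hf0⟩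
        | succ k => exact hstep k (by omega)
      · intro m hm
        cases m with
        | zero => exact haug
        | succ k => exact hIs k (by omega)
    · exact ⟨0, fun _ => [], rfl, rfl, by simp, fun m _ => isAug_nil⟩


/-- Every augmentation vector containing an entry `1` can be reduced to the empty
list by a finite sequence of resolutions at entries equal to `1`, staying within
augmentation vectors throughout. -/
theorem aug_reduces_to_empty (l : List (ZMod 2)) (haug : IsAug l)
    (h1 : (1 : ZMod 2) ∈ l) :
    ∃ (N : ℕ) (f : ℕ → List (ZMod 2)), f 0 = l ∧ f N = [] ∧
      (∀ m < N, ∃ a b : List (ZMod 2),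
        f m = a ++ [1] ++ b ∧ f (m + 1) = bumpLast a ++ bumpHead b) ∧
      (∀ m ≤ N, IsAug (f m)) :=
  reduce l.length l le_rfl haug (Or.inl h1)
end
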